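/- A bounded function f : [a,b] → ℝ is Riemann integrable on [a,b] if and only if any two generalized primitives of f differ by a constant, i.e., for all generalized primitives F, G of f there exists c ∈ ℝ with F(x) = G(x) + c for all x ∈ [a,b]. -/

import Mathlib

noncomputable section

/-- A partition of `[a, b]` given by points `x 0 = a < x 1 < ⋯ < x n = b`. -/
def IsPartition (a b : ℝ) (n : ℕ) (x : ℕ → ℝ) : Prop :=
  x 0 = a ∧ x n = b ∧ ∀ i < n, x i < x (i + 1)

/-- The lower Darboux sum of `f` associated to the partition points `x 0, …, x n`. -/
noncomputable def lowerSum (f : ℝ → ℝ) (n : ℕ) (x : ℕ → ℝ) : ℝ :=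
  ∑ i ∈ Finset.range n, sInf (f '' Set.Icc (x i) (x (i + 1))) * (x (i + 1) - x i)

/-- The upper Darboux sum of `f` associated to the partition points `x 0, …, x n`. -/
noncomputable def upperSum (f : ℝ → ℝ) (n : ℕ) (x : ℕ → ℝ) : ℝ :=
  ∑ i ∈ Finset.range n, sSup (f '' Set.Icc (x i) (x (i + 1))) * (x (i + 1) - x i)

/-- The lower Darboux integral of `f` over `[a, b]`: the supremum of the lower sums. -/
noncomputable def lowerDarboux (f : ℝ → ℝ) (a b : ℝ) : ℝ :=
  sSup {s : ℝ | ∃ n x, IsPartition a b n x ∧ s = lowerSum f n x}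

/-- The upper Darboux integral of `f` over `[a, b]`: the infimum of the upper sums. -/
noncomputable def upperDarboux (f : ℝ → ℝ) (a b : ℝ) : ℝ :=
  sInf {s : ℝ | ∃ n x, IsPartition a b n x ∧ s = upperSum f n x}

/-- `f` is bounded on the set `s`. -/
def BoundedOn (f : ℝ → ℝ) (s : Set ℝ) : Prop := ∃ M : ℝ, ∀ x ∈ s, |f x| ≤ M

/-- `f` is Riemann integrable on `[a, b]`: it is bounded there and its lower and upper
Darboux integrals coincide. -/
def RiemannIntegrableOn (f : ℝ → ℝ) (a b : ℝ) : Prop :=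
  BoundedOn f (Set.Icc a b) ∧ lowerDarboux f a b = upperDarboux f a b

/-- The oriented Riemann integral `∫_u^v f`: for `u ≤ v` it is the (lower) Darboux integral
over `[u, v]` (equal to the upper one when `f` is Riemann integrable, and `0` when `u = v`),
and for `v < u` it is minus the integral over `[v, u]`. -/
noncomputable def riemannIntegral (f : ℝ → ℝ) (u v : ℝ) : ℝ :=
  if u ≤ v then lowerDarboux f u v else -lowerDarboux f v u

/-- `F` is a generalized primitive of `f` on `[a, b]`: for all `x < y` in `[a, b]`,
`inf_{[x,y]} f ≤ (F y - F x)/(y - x) ≤ sup_{[x,y]} f`. -/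
def IsGenPrimitive (a b : ℝ) (f F : ℝ → ℝ) : Prop :=
  ∀ x ∈ Set.Icc a b, ∀ y ∈ Set.Icc a b, x < y →
    sInf (f '' Set.Icc x y) ≤ (F y - F x) / (y - x) ∧
      (F y - F x) / (y - x) ≤ sSup (f '' Set.Icc x y)


/-!
The lower Darboux integral `L(x, y)` is additive over adjacent intervals and lies between
`inf_{[x,y]} f · (y - x)` and `sup_{[x,y]} f · (y - x)`, so `t ↦ L(a, t)` is a generalized
primitive; since the upper integral is `U(f) = -L(-f)`, so is `t ↦ U(a, t)`. Conversely,
telescoping over a partition shows that every generalized primitive satisfies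
`L(a, t) ≤ F t - F a ≤ U(a, t)`. Integrability on `[a, b]` forces `L(a, t) = U(a, t)`, which pins
down `F t - F a`; and if the two Darboux primitives differ by a constant, comparing them at `a` and
at `b` gives `L(a, b) = U(a, b)`.
-/

open Set

variable {f F : ℝ → ℝ} {a b c t u v : ℝ} {n m : ℕ} {x y : ℕ → ℝ}

namespace BoundedOn

variable {s s' : Set ℝ}

lemma mono (h : BoundedOn f s) (hs : s' ⊆ s) : BoundedOn f s' :=
  let ⟨M, hM⟩ := h
  ⟨M, fun z hz => hM z (hs hz)⟩

lemma bddAbove_image (h : BoundedOn f s) : BddAbove (f '' s) :=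
  let ⟨M, hM⟩ := h
  ⟨M, forall_mem_image.2 fun z hz => (abs_le.1 (hM z hz)).2⟩

lemma bddBelow_image (h : BoundedOn f s) : BddBelow (f '' s) :=
  let ⟨M, hM⟩ := h
  ⟨-M, forall_mem_image.2 fun z hz => (abs_le.1 (hM z hz)).1⟩

lemma neg (h : BoundedOn f s) : BoundedOn (-f) s :=
  let ⟨M, hM⟩ := h
  ⟨M, fun z hz => by simpa using hM z hz⟩

end BoundedOn

lemma image_neg_fun (s : Set ℝ) : (-f) '' s = -(f '' s) := by
  rw [← image_neg_eq_neg, image_image]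
  rfl

namespace IsPartition

lemma le_of_le (hx : IsPartition u v n x) {i j : ℕ} (hij : i ≤ j) (hj : j ≤ n) :
    x i ≤ x j := by
  induction j, hij using Nat.le_induction with
  | base => exact le_rfl
  | succ k _ ih => exact (ih (by omega)).trans (hx.2.2 k (by omega)).le

lemma mem_Icc (hx : IsPartition u v n x) {i : ℕ} (hi : i ≤ n) : x i ∈ Icc u v :=
  ⟨hx.1 ▸ hx.le_of_le (Nat.zero_le i) hi, hx.2.1 ▸ hx.le_of_le hi le_rfl⟩

lemma Icc_subset (hx : IsPartition u v n x) {i : ℕ} (hi : i < n) :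
    Icc (x i) (x (i + 1)) ⊆ Icc u v :=
  Icc_subset_Icc (hx.mem_Icc hi.le).1 (hx.mem_Icc hi).2

lemma eq_of_zero (hx : IsPartition u v 0 x) : u = v :=
  hx.1.symm.trans hx.2.1

lemma tail (hx : IsPartition u v (n + 1) x) : IsPartition (x 1) v n (fun i => x (i + 1)) :=
  ⟨rfl, hx.2.1, fun i _ => hx.2.2 (i + 1) (by omega)⟩

end IsPartition

lemma isPartition_zero (u : ℝ) : IsPartition u u 0 (fun _ => u) :=
  ⟨rfl, rfl, by simp⟩

lemma isPartition_one (h : u < v) : IsPartition u v 1 (fun i => if i = 0 then u else v) :=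
  ⟨rfl, rfl, fun i hi => by
    obtain rfl : i = 0 := by omega
    simpa using h⟩

def appendPoints (n : ℕ) (x y : ℕ → ℝ) (i : ℕ) : ℝ :=
  if i ≤ n then x i else y (i - n)

lemma appendPoints_of_le {i : ℕ} (hi : i ≤ n) : appendPoints n x y i = x i :=
  if_pos hi

lemma appendPoints_add (hxy : x n = y 0) (i : ℕ) : appendPoints n x y (n + i) = y i := by
  unfold appendPoints
  split_ifs with hi
  · obtain rfl : i = 0 := by omega
    simpa using hxy
  · simp

lemma IsPartition.append (hx : IsPartition u c n x) (hy : IsPartition c v m y) :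
    IsPartition u v (n + m) (appendPoints n x y) := by
  have hxy : x n = y 0 := hx.2.1.trans hy.1.symm
  refine ⟨(appendPoints_of_le (Nat.zero_le n)).trans hx.1,
    (appendPoints_add hxy m).trans hy.2.1, fun i hi => ?_⟩
  rcases lt_or_ge i n with hin | hin
  · rw [appendPoints_of_le hin.le, appendPoints_of_le hin]
    exact hx.2.2 i hin
  · obtain ⟨j, rfl⟩ := Nat.exists_eq_add_of_le hin
    rw [add_assoc, appendPoints_add hxy, appendPoints_add hxy]
    exact hy.2.2 j (by omega)

lemma lowerSum_succ (f : ℝ → ℝ) (n : ℕ) (x : ℕ → ℝ) :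
    lowerSum f (n + 1) x =
      sInf (f '' Icc (x 0) (x 1)) * (x 1 - x 0) + lowerSum f n (fun i => x (i + 1)) := by
  rw [lowerSum, Finset.sum_range_succ', add_comm]
  rfl

lemma lowerSum_append (hxy : x n = y 0) :
    lowerSum f (n + m) (appendPoints n x y) = lowerSum f n x + lowerSum f m y := by
  simp only [lowerSum, Finset.sum_range_add]
  congr 1
  · refine Finset.sum_congr rfl fun i hi => ?_
    have hi : i < n := Finset.mem_range.1 hi
    rw [appendPoints_of_le hi.le, appendPoints_of_le hi]
  · simp only [add_assoc, appendPoints_add hxy]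

lemma lowerSum_le_sub (hx : IsPartition u v n x)
    (h : ∀ i < n,
      sInf (f '' Icc (x i) (x (i + 1))) * (x (i + 1) - x i) ≤ F (x (i + 1)) - F (x i)) :
    lowerSum f n x ≤ F v - F u :=
  calc lowerSum f n x ≤ ∑ i ∈ Finset.range n, (F (x (i + 1)) - F (x i)) :=
        Finset.sum_le_sum fun i hi => h i (Finset.mem_range.1 hi)
    _ = F v - F u := by rw [Finset.sum_range_sub (fun i => F (x i)), hx.1, hx.2.1]

lemma lowerSum_le_sSup_mul (hb : BoundedOn f (Icc u v)) (hx : IsPartition u v n x) :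
    lowerSum f n x ≤ sSup (f '' Icc u v) * (v - u) := by
  refine (lowerSum_le_sub (F := fun z => sSup (f '' Icc u v) * z) hx fun i hi => ?_).trans_eq
    (mul_sub _ _ _).symm
  have hxi : x i ∈ Icc (x i) (x (i + 1)) := left_mem_Icc.2 (hx.2.2 i hi).le
  rw [← mul_sub]
  refine mul_le_mul_of_nonneg_right ?_ (sub_nonneg.2 (hx.2.2 i hi).le)
  calc sInf (f '' Icc (x i) (x (i + 1))) ≤ f (x i) :=
        csInf_le ((hb.mono (hx.Icc_subset hi)).bddBelow_image) (mem_image_of_mem f hxi)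
    _ ≤ sSup (f '' Icc u v) :=
        le_csSup hb.bddAbove_image (mem_image_of_mem f (hx.Icc_subset hi hxi))

def lowerSums (f : ℝ → ℝ) (u v : ℝ) : Set ℝ :=
  {s | ∃ n x, IsPartition u v n x ∧ s = lowerSum f n x}

lemma lowerSum_mem_lowerSums (hx : IsPartition u v n x) : lowerSum f n x ∈ lowerSums f u v :=
  ⟨n, x, hx, rfl⟩

lemma lowerSums_nonempty (h : u ≤ v) : (lowerSums f u v).Nonempty := by
  rcases h.eq_or_lt with rfl | h
  · exact ⟨_, lowerSum_mem_lowerSums (isPartition_zero u)⟩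
  · exact ⟨_, lowerSum_mem_lowerSums (isPartition_one h)⟩

lemma lowerSums_bddAbove (hb : BoundedOn f (Icc u v)) : BddAbove (lowerSums f u v) :=
  ⟨_, by rintro _ ⟨n, x, hx, rfl⟩; exact lowerSum_le_sSup_mul hb hx⟩

lemma lowerSum_le_lowerDarboux (hb : BoundedOn f (Icc u v)) (hx : IsPartition u v n x) :
    lowerSum f n x ≤ lowerDarboux f u v :=
  le_csSup (lowerSums_bddAbove hb) (lowerSum_mem_lowerSums hx)

lemma lowerDarboux_le_of_forall (h : u ≤ v) {M : ℝ}
    (hM : ∀ n x, IsPartition u v n x → lowerSum f n x ≤ M) : lowerDarboux f u v ≤ M :=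
  csSup_le (lowerSums_nonempty h) (by rintro _ ⟨n, x, hx, rfl⟩; exact hM n x hx)

lemma lowerDarboux_le_sSup_mul (hb : BoundedOn f (Icc u v)) (h : u ≤ v) :
    lowerDarboux f u v ≤ sSup (f '' Icc u v) * (v - u) :=
  lowerDarboux_le_of_forall h fun _ _ hx => lowerSum_le_sSup_mul hb hx

lemma sInf_mul_le_lowerDarboux (hb : BoundedOn f (Icc u v)) (h : u ≤ v) :
    sInf (f '' Icc u v) * (v - u) ≤ lowerDarboux f u v := by
  rcases h.eq_or_lt with rfl | h
  · simpa [lowerSum] using lowerSum_le_lowerDarboux hb (isPartition_zero u)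
  · simpa [lowerSum] using lowerSum_le_lowerDarboux hb (isPartition_one h)

lemma lowerDarboux_self (f : ℝ → ℝ) (u : ℝ) : lowerDarboux f u u = 0 := by
  have hb : BoundedOn f (Icc u u) := ⟨|f u|, by simp⟩
  exact le_antisymm (by simpa using lowerDarboux_le_sSup_mul hb le_rfl)
    (by simpa using sInf_mul_le_lowerDarboux hb le_rfl)

lemma lowerDarboux_add_le (hb : BoundedOn f (Icc u v)) (h1 : u ≤ c) (h2 : c ≤ v) :
    lowerDarboux f u c + lowerDarboux f c v ≤ lowerDarboux f u v := by
  refine le_sub_iff_add_le.1 (lowerDarboux_le_of_forall h1 fun n x hx => ?_)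
  refine le_sub_comm.1 (lowerDarboux_le_of_forall h2 fun m y hy => ?_)
  rw [le_sub_iff_add_le', ← lowerSum_append (hx.2.1.trans hy.1.symm)]
  exact lowerSum_le_lowerDarboux hb (hx.append hy)

lemma sInf_mul_le_lowerDarboux_add (hb : BoundedOn f (Icc u v)) (h1 : u ≤ c) (h2 : c ≤ v) :
    sInf (f '' Icc u v) * (v - u) ≤ lowerDarboux f u c + lowerDarboux f c v := by
  have hl : sInf (f '' Icc u v) ≤ sInf (f '' Icc u c) :=
    csInf_le_csInf hb.bddBelow_image ((nonempty_Icc.2 h1).image f)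
      (image_mono (Icc_subset_Icc_right h2))
  have hr : sInf (f '' Icc u v) ≤ sInf (f '' Icc c v) :=
    csInf_le_csInf hb.bddBelow_image ((nonempty_Icc.2 h2).image f)
      (image_mono (Icc_subset_Icc_left h1))
  have := sInf_mul_le_lowerDarboux (hb.mono (Icc_subset_Icc_right h2)) h1
  have := sInf_mul_le_lowerDarboux (hb.mono (Icc_subset_Icc_left h1)) h2
  linarith [mul_le_mul_of_nonneg_right hl (sub_nonneg.2 h1),
    mul_le_mul_of_nonneg_right hr (sub_nonneg.2 h2)]

lemma lowerSum_le_lowerDarboux_add (hx : IsPartition u v n x) (hb : BoundedOn f (Icc u v))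
    (h1 : u ≤ c) (h2 : c ≤ v) : lowerSum f n x ≤ lowerDarboux f u c + lowerDarboux f c v := by
  induction n generalizing u x with
  | zero =>
    obtain rfl := hx.eq_of_zero
    obtain rfl := le_antisymm h1 h2
    simp [lowerSum, lowerDarboux_self]
  | succ n ih =>
    have hx1 : x 1 ∈ Icc u v := hx.mem_Icc (by omega)
    have hux1 : u < x 1 := hx.1 ▸ hx.2.2 0 (by omega)
    rw [lowerSum_succ, hx.1]
    rcases le_or_gt c (x 1) with hc | hc
    · have := sInf_mul_le_lowerDarboux_add (hb.mono (Icc_subset_Icc_right hx1.2)) h1 hc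
      have := lowerSum_le_lowerDarboux (hb.mono (Icc_subset_Icc_left hx1.1)) hx.tail
      have := lowerDarboux_add_le (hb.mono (Icc_subset_Icc_left h1)) hc hx1.2
      linarith
    · have := sInf_mul_le_lowerDarboux (hb.mono (Icc_subset_Icc_right hx1.2)) hux1.le
      have := ih hx.tail (hb.mono (Icc_subset_Icc_left hx1.1)) hc.le
      have := lowerDarboux_add_le (hb.mono (Icc_subset_Icc_right h2)) hux1.le hc.le
      linarith

lemma lowerDarboux_add (hb : BoundedOn f (Icc u v)) (h1 : u ≤ c) (h2 : c ≤ v) :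
    lowerDarboux f u v = lowerDarboux f u c + lowerDarboux f c v :=
  le_antisymm (lowerDarboux_le_of_forall (h1.trans h2) fun _ _ hx =>
      lowerSum_le_lowerDarboux_add hx hb h1 h2)
    (lowerDarboux_add_le hb h1 h2)

lemma upperSum_eq_neg_lowerSum_neg (f : ℝ → ℝ) (n : ℕ) (x : ℕ → ℝ) :
    upperSum f n x = -lowerSum (-f) n x := by
  simp only [upperSum, lowerSum, image_neg_fun, Real.sInf_neg, neg_mul, Finset.sum_neg_distrib,
    neg_neg]

lemma upperDarboux_eq_neg_lowerDarboux_neg (f : ℝ → ℝ) (u v : ℝ) :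
    upperDarboux f u v = -lowerDarboux (-f) u v := by
  rw [upperDarboux, lowerDarboux, ← Real.sInf_neg]
  congr 1
  ext s
  simp [upperSum_eq_neg_lowerSum_neg, neg_eq_iff_eq_neg]

lemma upperDarboux_self (f : ℝ → ℝ) (u : ℝ) : upperDarboux f u u = 0 := by
  simp [upperDarboux_eq_neg_lowerDarboux_neg, lowerDarboux_self]

lemma upperDarboux_add (hb : BoundedOn f (Icc u v)) (h1 : u ≤ c) (h2 : c ≤ v) :
    upperDarboux f u v = upperDarboux f u c + upperDarboux f c v := by
  simp only [upperDarboux_eq_neg_lowerDarboux_neg, lowerDarboux_add hb.neg h1 h2, neg_add]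

lemma isGenPrimitive_iff : IsGenPrimitive a b f F ↔ ∀ x ∈ Icc a b, ∀ y ∈ Icc a b, x < y →
      sInf (f '' Icc x y) * (y - x) ≤ F y - F x ∧ F y - F x ≤ sSup (f '' Icc x y) * (y - x) := by
  refine forall₂_congr fun x _ => forall₂_congr fun y _ => forall_congr' fun hxy => ?_
  rw [le_div_iff₀ (sub_pos.2 hxy), div_le_iff₀ (sub_pos.2 hxy)]

namespace IsGenPrimitive

lemma neg (hF : IsGenPrimitive a b f F) : IsGenPrimitive a b (-f) (-F) := by
  rw [isGenPrimitive_iff] at hF ⊢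
  intro x hx y hy hxy
  obtain ⟨h1, h2⟩ := hF x hx y hy hxy
  simp only [image_neg_fun, Real.sInf_neg, Real.sSup_neg]
  simp only [Pi.neg_apply]
  constructor <;> linarith

lemma lowerDarboux_le_sub (hF : IsGenPrimitive a b f F) (ht : t ∈ Icc a b) :
    lowerDarboux f a t ≤ F t - F a :=
  lowerDarboux_le_of_forall ht.1 fun _ _ hx => lowerSum_le_sub hx fun i hi =>
    have hsub : Icc a t ⊆ Icc a b := Icc_subset_Icc_right ht.2
    (isGenPrimitive_iff.1 hF _ (hsub (hx.mem_Icc hi.le)) _ (hsub (hx.mem_Icc hi))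
      (hx.2.2 i hi)).1

lemma sub_le_upperDarboux (hF : IsGenPrimitive a b f F) (ht : t ∈ Icc a b) :
    F t - F a ≤ upperDarboux f a t := by
  have := hF.neg.lowerDarboux_le_sub ht
  rw [upperDarboux_eq_neg_lowerDarboux_neg]
  simp only [Pi.neg_apply] at this
  linarith

end IsGenPrimitive

lemma isGenPrimitive_lowerDarboux (hb : BoundedOn f (Icc a b)) :
    IsGenPrimitive a b f (lowerDarboux f a ·) := by
  refine isGenPrimitive_iff.2 fun x hx y hy hxy => ?_
  have hbxy := hb.mono (Icc_subset_Icc hx.1 hy.2)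
  rw [lowerDarboux_add (hb.mono (Icc_subset_Icc_right hy.2)) hx.1 hxy.le, add_sub_cancel_left]
  exact ⟨sInf_mul_le_lowerDarboux hbxy hxy.le, lowerDarboux_le_sSup_mul hbxy hxy.le⟩

lemma isGenPrimitive_upperDarboux (hb : BoundedOn f (Icc a b)) :
    IsGenPrimitive a b f (upperDarboux f a ·) := by
  have := (isGenPrimitive_lowerDarboux hb.neg).neg
  rw [neg_neg] at this
  convert this using 1
  funext t
  simp [upperDarboux_eq_neg_lowerDarboux_neg]

lemma lowerDarboux_le_upperDarboux (hb : BoundedOn f (Icc u v)) (h : u ≤ v) :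
    lowerDarboux f u v ≤ upperDarboux f u v := by
  simpa [lowerDarboux_self] using
    (isGenPrimitive_lowerDarboux hb).sub_le_upperDarboux (right_mem_Icc.2 h)

lemma RiemannIntegrableOn.mono_right (h : RiemannIntegrableOn f a b) (ht : t ∈ Icc a b) :
    RiemannIntegrableOn f a t := by
  obtain ⟨hb, hLU⟩ := h
  refine ⟨hb.mono (Icc_subset_Icc_right ht.2), ?_⟩
  have := lowerDarboux_add hb ht.1 ht.2
  have := upperDarboux_add hb ht.1 ht.2
  have := lowerDarboux_le_upperDarboux (hb.mono (Icc_subset_Icc_right ht.2)) ht.1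
  have := lowerDarboux_le_upperDarboux (hb.mono (Icc_subset_Icc_left ht.1)) ht.2
  linarith

lemma IsGenPrimitive.sub_eq_lowerDarboux (hF : IsGenPrimitive a b f F)
    (hI : RiemannIntegrableOn f a t) (ht : t ∈ Icc a b) : F t - F a = lowerDarboux f a t :=
  le_antisymm ((hF.sub_le_upperDarboux ht).trans hI.2.ge) (hF.lowerDarboux_le_sub ht)

/-- A bounded function `f` on `[a, b]` is Riemann integrable if and only if any two of its
generalized primitives differ by a constant on `[a, b]`. -/
theorem riemannIntegrable_iff_genPrimitives_differ_by_const (a b : ℝ) (hab : a ≤ b)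
    (f : ℝ → ℝ) (hf : BoundedOn f (Set.Icc a b)) :
    RiemannIntegrableOn f a b ↔
      ∀ F G : ℝ → ℝ, IsGenPrimitive a b f F → IsGenPrimitive a b f G →
        ∃ c : ℝ, ∀ x ∈ Set.Icc a b, F x = G x + c := by
  constructor
  · intro hI F G hF hG
    refine ⟨F a - G a, fun t ht => ?_⟩
    have hIt := hI.mono_right ht
    linarith [hF.sub_eq_lowerDarboux hIt ht, hG.sub_eq_lowerDarboux hIt ht]
  · intro h
    obtain ⟨c, hc⟩ := h _ _ (isGenPrimitive_lowerDarboux hf) (isGenPrimitive_upperDarboux hf)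
    have ha := hc a (left_mem_Icc.2 hab)
    have hb := hc b (right_mem_Icc.2 hab)
    rw [lowerDarboux_self, upperDarboux_self] at ha
    exact ⟨hf, by linarith⟩
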